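/- arXiv:2007.03509 — 4 statements merged into one kernel-verified Lean document; each statement's English description precedes it below -/
import Mathlib

section
/- Let f : ℝᵈ → ℝ be differentiable and L-smooth, ω a point with ⟨ω−x, ∇f(x)⟩ ≤ f(ω) − f(x) − (μ/2)‖x−ω‖² for 0 ≤ μ ≤ L, and let ℓ* ≤ f(x⁺) be a lower bound on f with f(ω) − ℓ* ≤ ε. For η = 1/L and x⁺ = x − η∇f(x), we have ‖x⁺ − ω‖² ≤ (1 − μ/L)‖x − ω‖² + 2ηε. -/
open RealInnerProductSpace

/-
For the step `x⁺ = x - η ∇f(x)` with `η = 1/L`, expanding the square gives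
`‖x⁺ - ω‖² = ‖x - ω‖² + 2η⟪ω - x, ∇f(x)⟫ + η²‖∇f(x)‖²`. The inner product is bounded by the
strong-convexity-type inequality at `ω`, and the descent lemma `f(x⁺) ≤ f(x) - (η/2)‖∇f(x)‖²`
turns `η²‖∇f(x)‖²` into `2η(f(x) - f(x⁺))`. The terms `f(x)` cancel, leaving
`2η(f(ω) - f(x⁺)) ≤ 2η(f(ω) - ℓ*) ≤ 2ηε`.
-/

section

variable {E : Type*} [NormedAddCommGroup E] [InnerProductSpace ℝ E]

theorem norm_sub_smul_sub_sq (x g ω : E) (t : ℝ) :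
    ‖x - t • g - ω‖ ^ 2 = ‖x - ω‖ ^ 2 + 2 * t * ⟪ω - x, g⟫ + t ^ 2 * ‖g‖ ^ 2 := by
  rw [show x - t • g - ω = (x - ω) - t • g by abel, norm_sub_sq_real, real_inner_smul_right,
    norm_smul, Real.norm_eq_abs, mul_pow, sq_abs, ← neg_sub ω x, inner_neg_left]
  ring

theorem le_sub_of_quadratic_upper_bound {f : E → ℝ} {L : ℝ} (hL : 0 < L) (x g : E)
    (h : f (x - (1 / L) • g) ≤
      f x + ⟪x - (1 / L) • g - x, g⟫ + (L / 2) * ‖x - (1 / L) • g - x‖ ^ 2) :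
    f (x - (1 / L) • g) ≤ f x - 1 / (2 * L) * ‖g‖ ^ 2 := by
  rw [sub_sub_cancel_left, inner_neg_left, real_inner_smul_left, real_inner_self_eq_norm_sq,
    norm_neg, norm_smul, Real.norm_eq_abs, abs_of_pos (one_div_pos.mpr hL)] at h
  convert h using 1
  field_simp
  ring

end

theorem stmt_3_general (d : ℕ) (f : EuclideanSpace ℝ (Fin d) → ℝ) (L μ ε : ℝ) (hL : 0 < L)
    (hsmooth : ∀ x y, f x ≤ f y + ⟪x - y, gradient f y⟫ + (L / 2) * ‖x - y‖ ^ 2)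
    (x ω : EuclideanSpace ℝ (Fin d)) (ℓstar : ℝ)
    (hconv : ⟪ω - x, gradient f x⟫ ≤ f ω - f x - (μ / 2) * ‖x - ω‖ ^ 2)
    (η : ℝ) (hη : η = 1 / L)
    (xplus : EuclideanSpace ℝ (Fin d)) (hx : xplus = x - η • gradient f x)
    (hlb : ℓstar ≤ f xplus) (hinc : f ω - ℓstar ≤ ε) :
    ‖xplus - ω‖ ^ 2 ≤ (1 - μ / L) * ‖x - ω‖ ^ 2 + 2 * η * ε := by
  subst hη hx
  set g := gradient f x
  have hdescent := le_sub_of_quadratic_upper_bound hL x g (hsmooth _ x)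
  calc ‖x - (1 / L) • g - ω‖ ^ 2
      = ‖x - ω‖ ^ 2 + 2 * (1 / L) * ⟪ω - x, g⟫ + 2 * (1 / L) * (1 / (2 * L) * ‖g‖ ^ 2) := by
        rw [norm_sub_smul_sub_sq]; ring
    _ ≤ ‖x - ω‖ ^ 2 + 2 * (1 / L) * (f ω - f x - (μ / 2) * ‖x - ω‖ ^ 2)
          + 2 * (1 / L) * (f x - f (x - (1 / L) • g)) := by gcongr; linarith
    _ = (1 - μ / L) * ‖x - ω‖ ^ 2 + 2 * (1 / L) * (f ω - f (x - (1 / L) • g)) := by ring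
    _ ≤ (1 - μ / L) * ‖x - ω‖ ^ 2 + 2 * (1 / L) * ε := by gcongr; linarith

theorem stmt_3 (d : ℕ) (f : EuclideanSpace ℝ (Fin d) → ℝ) (L μ ε : ℝ) (hL : 0 < L)
    (hμ0 : 0 ≤ μ) (hμL : μ ≤ L) (hε : 0 ≤ ε)
    (hdiff : Differentiable ℝ f)
    (hsmooth : ∀ x y, f x ≤ f y + ⟪x - y, gradient f y⟫ + (L / 2) * ‖x - y‖ ^ 2)
    (x ω : EuclideanSpace ℝ (Fin d)) (ℓstar : ℝ)
    (hconv : ⟪ω - x, gradient f x⟫ ≤ f ω - f x - (μ / 2) * ‖x - ω‖ ^ 2)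
    (η : ℝ) (hη : η = 1 / L)
    (xplus : EuclideanSpace ℝ (Fin d)) (hx : xplus = x - η • gradient f x)
    (hlb : ℓstar ≤ f xplus) (hinc : f ω - ℓstar ≤ ε) :
    ‖xplus - ω‖ ^ 2 ≤ (1 - μ / L) * ‖x - ω‖ ^ 2 + 2 * η * ε :=
  stmt_3_general d f L μ ε hL hsmooth x ω ℓstar hconv η hη xplus hx hlb hinc
end

section
/- Let μ₁,...,μₙ ∈ [0, L] with L > 0 and μ̄ = (1/n)∑ᵢ μᵢ > 0, and set α = ∏_{i=1}^n (1 − μᵢ/L). Suppose M̄ ≤ ∑_{k=0}^{n−1} (1 − μ̄/L)^{n−k−1}. Then 2εM̄ / (L(1−α)) ≤ 2ε/μ̄ for any ε ≥ 0. -/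
open Finset

/- With `r = 1 - μ̄/L`, the geometric sum `∑ₖ rⁿ⁻ᵏ⁻¹ = (1 - rⁿ) / (1 - r)` bounds `M̄` by
`L (1 - rⁿ) / μ̄`. Since `r` is the arithmetic mean of the factors `1 - μᵢ/L` of `α`,
AM-GM gives `α ≤ rⁿ`, i.e. `1 - rⁿ ≤ 1 - α`, and the factor `L (1 - α)` cancels. -/

theorem Real.prod_le_arith_mean_pow {ι : Type*} (s : Finset ι) (z : ι → ℝ)
    (hz : ∀ i ∈ s, 0 ≤ z i) : ∏ i ∈ s, z i ≤ ((∑ i ∈ s, z i) / #s) ^ #s := by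
  rcases s.eq_empty_or_nonempty with rfl | hs
  · simp
  have hcard : (0 : ℝ) < #s := by exact_mod_cast hs.card_pos
  have amgm := Real.geom_mean_le_arith_mean s (fun _ ↦ 1) z (fun _ _ ↦ zero_le_one)
    (by simpa using hcard) hz
  simp only [Real.rpow_one, sum_const, nsmul_eq_mul, mul_one, one_mul] at amgm
  calc ∏ i ∈ s, z i = ((∏ i ∈ s, z i) ^ (#s : ℝ)⁻¹) ^ #s :=
        (Real.rpow_inv_natCast_pow (prod_nonneg hz) hs.card_pos.ne').symm
    _ ≤ ((∑ i ∈ s, z i) / #s) ^ #s := by gcongr; exact Real.rpow_nonneg (prod_nonneg hz) _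

theorem geom_sum_range_rev_eq {K : Type*} [DivisionRing K] {x : K} (h : x ≠ 1) (n : ℕ) :
    ∑ k ∈ range n, x ^ (n - k - 1) = (1 - x ^ n) / (1 - x) := by
  have hrev : ∑ k ∈ range n, x ^ (n - k - 1) = ∑ k ∈ range n, x ^ k := by
    rw [← sum_range_reflect]
    exact sum_congr rfl fun k hk ↦ by rw [mem_range] at hk; congr 1; omega
  rw [hrev, geom_sum_eq h, ← neg_div_neg_eq, neg_sub, neg_sub]

theorem stmt_5_general (n : ℕ) (L : ℝ) (hL : 0 < L) (μ : Fin n → ℝ)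
    (hμL : ∀ i, μ i ≤ L)
    (μbar : ℝ) (hμbar : μbar = (∑ i, μ i) / n) (hμbarpos : 0 < μbar)
    (α : ℝ) (hα : α = ∏ i, (1 - μ i / L))
    (M : ℝ) (hM : M ≤ ∑ k ∈ Finset.range n, (1 - μbar / L) ^ (n - k - 1))
    (ε : ℝ) (hε : 0 ≤ ε) :
    2 * ε * M / (L * (1 - α)) ≤ 2 * ε / μbar := by
  -- for `n = 0` the mean would be the junk value `0 / 0 = 0`
  have hn : (n : ℝ) ≠ 0 := by rintro h; simp [hμbar, h] at hμbarpos
  have hz : ∀ i, 0 ≤ 1 - μ i / L := fun i ↦ sub_nonneg.2 (div_le_one_of_le₀ (hμL i) hL.le)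
  have hmean : (∑ i, (1 - μ i / L)) / n = 1 - μbar / L := by
    rw [sum_sub_distrib, ← sum_div, hμbar]
    field_simp
    simp [mul_comm]
  have hr0 : 0 ≤ 1 - μbar / L :=
    hmean ▸ div_nonneg (sum_nonneg fun i _ ↦ hz i) n.cast_nonneg
  have hr1 : 1 - μbar / L < 1 := by linarith [div_pos hμbarpos hL]
  have hα_le : α ≤ (1 - μbar / L) ^ n := by
    have amgm := Real.prod_le_arith_mean_pow univ _ fun i _ ↦ hz i
    rwa [card_univ, Fintype.card_fin, hmean, ← hα] at amgm
  have hgap : 0 < 1 - α := sub_pos.2 <| hα_le.trans_lt (pow_lt_one₀ hr0 hr1 (by exact_mod_cast hn))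
  have hM' : M ≤ (1 - α) * L / μbar := by
    refine hM.trans ?_
    rw [geom_sum_range_rev_eq hr1.ne, sub_sub_cancel, div_div_eq_mul_div]
    gcongr
  calc 2 * ε * M / (L * (1 - α)) ≤ 2 * ε * ((1 - α) * L / μbar) / (L * (1 - α)) := by gcongr
    _ = 2 * ε / μbar := by field_simp [hgap.ne']

theorem stmt_5 (n : ℕ) (hn : 0 < n) (L : ℝ) (hL : 0 < L) (μ : Fin n → ℝ)
    (hμ0 : ∀ i, 0 ≤ μ i) (hμL : ∀ i, μ i ≤ L)
    (μbar : ℝ) (hμbar : μbar = (∑ i, μ i) / n) (hμbarpos : 0 < μbar)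
    (α : ℝ) (hα : α = ∏ i, (1 - μ i / L))
    (M : ℝ) (hM : M ≤ ∑ k ∈ Finset.range n, (1 - μbar / L) ^ (n - k - 1))
    (ε : ℝ) (hε : 0 ≤ ε) :
    2 * ε * M / (L * (1 - α)) ≤ 2 * ε / μbar :=
  stmt_5_general n L hL μ hμL μbar hμbar hμbarpos α hα M hM ε hε
end

section
/- Let each ℓᵢ : ℝᵈ → ℝ (i = 1,...,n) be L-smooth and satisfy ℓᵢ(ω) ≥ ℓᵢ(x) + ⟨ω−x, ∇ℓᵢ(x)⟩ + (μᵢ/2)‖x−ω‖² for all x ∈ ℝᵈ and all ω in a common nonempty set Θ* on which each ℓᵢ attains its global minimum, with 0 ≤ μᵢ ≤ L. Let σ be a permutation of {1,...,n} and define θ₀ ∈ ℝᵈ, θₖ₊₁ = θₖ − (1/L)∇ℓ_{σ(k)}(θₖ) for k = 0,...,n−1. Then for every ω ∈ Θ*, ‖θₙ − ω‖² ≤ ∏_{i=1}^n (1 − μᵢ/L) · ‖θ₀ − ω‖². -/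
/-! A gradient step of length `1/L` decreases `f` by at least `‖∇f‖²/(2L)` (descent lemma), and
since `f ≥ f ω` at any minimiser `ω`, the lower bound at `ω` turns into
`⟪x - ω, ∇f x⟫ ≥ (μ/2)‖x - ω‖² + ‖∇f x‖²/(2L)`. Expanding `‖x - ∇f x / L - ω‖²` then gives the
factor `1 - μ/L` for each step, and since every step has its own minimiser `ω` in common, the
factors simply multiply along the epoch, in whatever order the samples are visited. -/

open RealInnerProductSpace

section GradientStep

variable {E : Type*} [NormedAddCommGroup E] [InnerProductSpace ℝ E]
  {f : E → ℝ} {L μ : ℝ} {x g ω : E}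

theorem descent_of_quadratic_upper_bound (hL : 0 < L)
    (hup : ∀ y, f y ≤ f x + ⟪y - x, g⟫ + L / 2 * ‖y - x‖ ^ 2) :
    f (x - (1 / L) • g) ≤ f x - ‖g‖ ^ 2 / (2 * L) := by
  have h := hup (x - (1 / L) • g)
  rw [sub_sub_cancel_left, inner_neg_left, real_inner_smul_left, real_inner_self_eq_norm_sq,
    norm_neg, norm_smul, Real.norm_of_nonneg (by positivity)] at h
  have hL' : L ≠ 0 := hL.ne'
  have hcalc : f x + -(1 / L * ‖g‖ ^ 2) + L / 2 * (1 / L * ‖g‖) ^ 2 = f x - ‖g‖ ^ 2 / (2 * L) := by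
    field_simp
    ring
  linarith

theorem norm_gradient_step_sub_sq_le (hL : 0 < L)
    (hup : ∀ y, f y ≤ f x + ⟪y - x, g⟫ + L / 2 * ‖y - x‖ ^ 2)
    (hmin : ∀ y, f ω ≤ f y)
    (hlow : f ω ≥ f x + ⟪ω - x, g⟫ + μ / 2 * ‖x - ω‖ ^ 2) :
    ‖x - (1 / L) • g - ω‖ ^ 2 ≤ (1 - μ / L) * ‖x - ω‖ ^ 2 := by
  have hdescent : f ω ≤ f x - ‖g‖ ^ 2 / (2 * L) :=
    (hmin _).trans (descent_of_quadratic_upper_bound hL hup)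
  have hinner : μ / 2 * ‖x - ω‖ ^ 2 + ‖g‖ ^ 2 / (2 * L) ≤ ⟪x - ω, g⟫ := by
    rw [← neg_sub x ω, inner_neg_left] at hlow
    linarith
  have hexpand : ‖x - (1 / L) • g - ω‖ ^ 2
      = ‖x - ω‖ ^ 2 - 2 / L * ⟪x - ω, g⟫ + ‖g‖ ^ 2 / L ^ 2 := by
    rw [sub_right_comm, norm_sub_sq_real, real_inner_smul_right, norm_smul,
      Real.norm_of_nonneg (by positivity)]
    ring
  have hscaled := mul_le_mul_of_nonneg_left hinner (by positivity : (0 : ℝ) ≤ 2 / L)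
  have hL' : L ≠ 0 := hL.ne'
  have hcalc : 2 / L * (μ / 2 * ‖x - ω‖ ^ 2 + ‖g‖ ^ 2 / (2 * L))
      = μ / L * ‖x - ω‖ ^ 2 + ‖g‖ ^ 2 / L ^ 2 := by
    field_simp
  rw [hexpand]
  linarith

end GradientStep

theorem le_prod_mul_of_le_mul {R : Type*} [CommSemiring R] [PartialOrder R] [IsOrderedRing R]
    {n : ℕ} (a : ℕ → R) (c : Fin n → R) (hc : ∀ k, 0 ≤ c k)
    (ha : ∀ k : Fin n, a (k + 1) ≤ c k * a k) :
    a n ≤ (∏ k, c k) * a 0 := by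
  induction n with
  | zero => simp
  | succ n ih =>
    have hprefix := ih (fun k => c k.castSucc) (fun k => hc _) (fun k => ha k.castSucc)
    calc a (n + 1) ≤ c (Fin.last n) * a n := ha (Fin.last n)
      _ ≤ c (Fin.last n) * ((∏ k : Fin n, c k.castSucc) * a 0) :=
        mul_le_mul_of_nonneg_left hprefix (hc _)
      _ = (∏ k, c k) * a 0 := by rw [Fin.prod_univ_castSucc]; ring

theorem stmt_12_general (d n : ℕ) (ℓ : Fin n → EuclideanSpace ℝ (Fin d) → ℝ)
    (L : ℝ) (hL : 0 < L) (μ : Fin n → ℝ) (hμL : ∀ i, μ i ≤ L)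
    (hsmooth : ∀ i x y, ℓ i x ≤ ℓ i y + ⟪x - y, gradient (ℓ i) y⟫ + (L / 2) * ‖x - y‖ ^ 2)
    (Θstar : Set (EuclideanSpace ℝ (Fin d)))
    (hmin : ∀ i, ∀ ω ∈ Θstar, ∀ y, ℓ i ω ≤ ℓ i y)
    (hconv : ∀ i, ∀ x, ∀ ω ∈ Θstar,
      ℓ i ω ≥ ℓ i x + ⟪ω - x, gradient (ℓ i) x⟫ + (μ i / 2) * ‖x - ω‖ ^ 2)
    (σ : Equiv.Perm (Fin n)) (θ : ℕ → EuclideanSpace ℝ (Fin d))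
    (hrec : ∀ k : Fin n, θ (k.val + 1) = θ k.val - (1 / L) • gradient (ℓ (σ k)) (θ k.val)) :
    ∀ ω ∈ Θstar, ‖θ n - ω‖ ^ 2 ≤ (∏ i, (1 - μ i / L)) * ‖θ 0 - ω‖ ^ 2 := by
  intro ω hω
  have hfactor_nonneg : ∀ i, 0 ≤ 1 - μ i / L := fun i =>
    sub_nonneg.mpr ((div_le_one hL).mpr (hμL i))
  have hstep : ∀ k : Fin n, ‖θ (k + 1) - ω‖ ^ 2 ≤ (1 - μ (σ k) / L) * ‖θ k - ω‖ ^ 2 := fun k => by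
    rw [hrec k]
    exact norm_gradient_step_sub_sq_le hL (fun y => hsmooth (σ k) y (θ k)) (hmin (σ k) ω hω)
      (hconv (σ k) (θ k) ω hω)
  rw [← Equiv.prod_comp σ]
  exact le_prod_mul_of_le_mul (fun k => ‖θ k - ω‖ ^ 2) _ (fun k => hfactor_nonneg (σ k)) hstep

theorem stmt_12 (d n : ℕ) (ℓ : Fin n → EuclideanSpace ℝ (Fin d) → ℝ)
    (L : ℝ) (hL : 0 < L) (μ : Fin n → ℝ) (hμ0 : ∀ i, 0 ≤ μ i) (hμL : ∀ i, μ i ≤ L)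
    (hdiff : ∀ i, Differentiable ℝ (ℓ i))
    (hsmooth : ∀ i x y, ℓ i x ≤ ℓ i y + ⟪x - y, gradient (ℓ i) y⟫ + (L / 2) * ‖x - y‖ ^ 2)
    (Θstar : Set (EuclideanSpace ℝ (Fin d))) (hΘne : Θstar.Nonempty)
    (hmin : ∀ i, ∀ ω ∈ Θstar, ∀ y, ℓ i ω ≤ ℓ i y)
    (hconv : ∀ i, ∀ x, ∀ ω ∈ Θstar,
      ℓ i ω ≥ ℓ i x + ⟪ω - x, gradient (ℓ i) x⟫ + (μ i / 2) * ‖x - ω‖ ^ 2)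
    (σ : Equiv.Perm (Fin n)) (θ : ℕ → EuclideanSpace ℝ (Fin d))
    (hrec : ∀ k : Fin n, θ (k.val + 1) = θ k.val - (1 / L) • gradient (ℓ (σ k)) (θ k.val)) :
    ∀ ω ∈ Θstar, ‖θ n - ω‖ ^ 2 ≤ (∏ i, (1 - μ i / L)) * ‖θ 0 - ω‖ ^ 2 :=
  stmt_12_general d n ℓ L hL μ hμL hsmooth Θstar hmin hconv σ θ hrec
end

section
/- Let x₁,...,xₙ ∈ [0,1] and let S denote the expected value of ∏_{j∈J} xⱼ when J is a uniformly random subset of {1,...,n} of fixed size m (0 ≤ m ≤ n). Then S ≤ x̄^m where x̄ = (1/n)∑ᵢ xᵢ. -/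
/-! Maclaurin's inequality. Write `e k` for the `k`-th elementary symmetric sum of the `x i`,
`i ∈ s`, `n = #s`, and `g i` for `e k` taken over `s.erase i`. Counting pairs `(i, t)` with
`i ∈ t` gives `(k + 1) e (k + 1) = ∑ x i g i`, and counting pairs with `i ∉ t` gives
`∑ g i = (n - k) e k`. For nonnegative `x` the sequences `x` and `g` are oppositely ordered, so
Chebyshev's sum inequality yields `n (k + 1) e (k + 1) ≤ (∑ x i) (n - k) e k`, that is,
`e (k + 1) / C(n, k + 1) ≤ (∑ x i / n) * (e k / C(n, k))`; induction on `k` finishes. -/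

open Finset

namespace Finset

variable {ι R : Type*}

section CommSemiring

variable [CommSemiring R] (x : ι → R)

def esymm (s : Finset ι) (k : ℕ) : R := ∑ t ∈ s.powersetCard k, ∏ i ∈ t, x i

variable [DecidableEq ι]

theorem esymm_insert {a : ι} {s : Finset ι} (ha : a ∉ s) (k : ℕ) :
    esymm x (insert a s) (k + 1) = esymm x s (k + 1) + x a * esymm x s k := by
  have ha' {t} (ht : t ∈ s.powersetCard k) : a ∉ t := notMem_mono (mem_powersetCard.1 ht).1 ha
  rw [esymm, powersetCard_succ_insert ha, sum_union, sum_image, esymm, esymm, mul_sum]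
  · exact congrArg _ (sum_congr rfl fun t ht => prod_insert (ha' ht))
  · exact insert_erase_invOn.2.injOn.mono fun t ht => ha' ht
  · simp only [disjoint_left, mem_powersetCard, mem_image]
    grind

theorem sum_esymm_erase (s : Finset ι) (k : ℕ) :
    ∑ i ∈ s, esymm x (s.erase i) k = ((#s - k : ℕ) : R) * esymm x s k := by
  simp only [esymm, mul_sum]
  rw [sum_comm' (t' := s.powersetCard k) (s' := (s \ ·))]
  · refine sum_congr rfl fun t ht => ?_
    rw [sum_const, card_sdiff_of_subset (mem_powersetCard.1 ht).1, (mem_powersetCard.1 ht).2,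
      nsmul_eq_mul]
  · intro i t
    simp only [mem_powersetCard, subset_erase, mem_sdiff]
    tauto

theorem sum_filter_mem_powersetCard_succ {M : Type*} [AddCommMonoid M] {i : ι} {s : Finset ι}
    (hi : i ∈ s) (k : ℕ) (f : Finset ι → M) :
    ∑ t ∈ s.powersetCard (k + 1) with i ∈ t, f (t.erase i) =
      ∑ t ∈ (s.erase i).powersetCard k, f t := by
  refine sum_nbij' (·.erase i) (insert i) ?_ ?_ ?_ ?_ fun _ _ => rfl
  all_goals intro t; simp only [mem_filter, mem_powersetCard, subset_erase]; grind

theorem succ_mul_esymm_succ (s : Finset ι) (k : ℕ) :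
    ((k + 1 : ℕ) : R) * esymm x s (k + 1) = ∑ i ∈ s, x i * esymm x (s.erase i) k := by
  simp only [esymm, mul_sum]
  calc ∑ t ∈ s.powersetCard (k + 1), ((k + 1 : ℕ) : R) * ∏ j ∈ t, x j
      = ∑ t ∈ s.powersetCard (k + 1), ∑ i ∈ t, x i * ∏ j ∈ t.erase i, x j := by
        refine sum_congr rfl fun t ht => ?_
        rw [sum_congr rfl fun i hi => mul_prod_erase t x hi, sum_const,
          (mem_powersetCard.1 ht).2, nsmul_eq_mul]
    _ = ∑ i ∈ s, ∑ t ∈ s.powersetCard (k + 1) with i ∈ t,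
          x i * ∏ j ∈ t.erase i, x j := by
        refine sum_comm' fun t i => ?_
        simp only [mem_filter, mem_powersetCard]
        grind
    _ = _ := sum_congr rfl fun i hi =>
        sum_filter_mem_powersetCard_succ hi k fun t => x i * ∏ j ∈ t, x j

end CommSemiring

section LinearOrderedField

variable [Field R] [LinearOrder R] [IsStrictOrderedRing R] {x : ι → R} {s : Finset ι}

theorem esymm_nonneg (hx : ∀ i ∈ s, 0 ≤ x i) (k : ℕ) : 0 ≤ esymm x s k :=
  sum_nonneg fun _ ht => prod_nonneg fun i hi => hx i ((mem_powersetCard.1 ht).1 hi)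

variable [DecidableEq ι]

theorem antivaryOn_esymm_erase (hx : ∀ i ∈ s, 0 ≤ x i) (k : ℕ) :
    AntivaryOn x (fun i => esymm x (s.erase i) k) s := by
  intro i hi j hj (hlt : esymm x (s.erase i) k < esymm x (s.erase j) k)
  obtain rfl | hij := eq_or_ne i j
  · exact le_rfl
  cases k with
  | zero => simp [esymm] at hlt
  | succ k =>
    -- `s.erase i` and `s.erase j` are the common set `(s.erase i).erase j` plus `j`, resp. `i`,
    -- so the two sums differ by `(x j - x i) * esymm x ((s.erase i).erase j) k`.
    have hjt : j ∉ (s.erase i).erase j := notMem_erase j _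
    have hit : i ∉ (s.erase i).erase j := by simp
    have hsi : s.erase i = insert j ((s.erase i).erase j) :=
      (insert_erase (mem_erase.2 ⟨hij.symm, hj⟩)).symm
    have hsj : s.erase j = insert i ((s.erase i).erase j) := by
      rw [erase_right_comm]; exact (insert_erase (mem_erase.2 ⟨hij, hi⟩)).symm
    rw [hsi, hsj, esymm_insert x hjt, esymm_insert x hit, add_lt_add_iff_left] at hlt
    exact (lt_of_mul_lt_mul_right hlt
      (esymm_nonneg (fun l hl => hx l (mem_of_mem_erase (mem_of_mem_erase hl))) k)).le

theorem card_mul_esymm_succ_le (hx : ∀ i ∈ s, 0 ≤ x i) (k : ℕ) :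
    (#s : R) * (((k + 1 : ℕ) : R) * esymm x s (k + 1)) ≤
      (∑ i ∈ s, x i) * (((#s - k : ℕ) : R) * esymm x s k) := by
  rw [succ_mul_esymm_succ, ← sum_esymm_erase]
  exact (antivaryOn_esymm_erase hx k).card_mul_sum_le_sum_mul_sum

theorem esymm_succ_div_choose_le (hx : ∀ i ∈ s, 0 ≤ x i) {k : ℕ} (hk : k < #s) :
    esymm x s (k + 1) / (#s).choose (k + 1) ≤
      (∑ i ∈ s, x i) / #s * (esymm x s k / (#s).choose k) := by
  have hchoose :
      ((#s).choose (k + 1) : R) * ((k + 1 : ℕ) : R) = (#s).choose k * ((#s - k : ℕ) : R) :=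
    mod_cast Nat.choose_succ_right_eq (#s) k
  have hn : (0 : R) < #s := mod_cast k.zero_le.trans_lt hk
  have hd : (0 : R) < ((#s - k : ℕ) : R) := mod_cast Nat.sub_pos_of_lt hk
  have hc' : (0 : R) < (#s).choose (k + 1) := mod_cast Nat.choose_pos hk
  calc esymm x s (k + 1) / (#s).choose (k + 1)
      = #s * (((k + 1 : ℕ) : R) * esymm x s (k + 1)) /
          (#s * ((#s).choose k * ((#s - k : ℕ) : R))) := by
        rw [← hchoose]
        field_simp
    _ ≤ (∑ i ∈ s, x i) * (((#s - k : ℕ) : R) * esymm x s k) /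
          (#s * ((#s).choose k * ((#s - k : ℕ) : R))) :=
        div_le_div_of_nonneg_right (card_mul_esymm_succ_le hx k) (by positivity)
    _ = (∑ i ∈ s, x i) / #s * (esymm x s k / (#s).choose k) := by
        field_simp

theorem esymm_div_choose_le_pow (hx : ∀ i ∈ s, 0 ≤ x i) {k : ℕ} (hk : k ≤ #s) :
    esymm x s k / (#s).choose k ≤ ((∑ i ∈ s, x i) / #s) ^ k := by
  induction k with
  | zero => simp [esymm]
  | succ k ih =>
    calc esymm x s (k + 1) / (#s).choose (k + 1)
        ≤ (∑ i ∈ s, x i) / #s * (esymm x s k / (#s).choose k) :=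
          esymm_succ_div_choose_le hx hk
      _ ≤ (∑ i ∈ s, x i) / #s * ((∑ i ∈ s, x i) / #s) ^ k := by
        have := sum_nonneg hx
        gcongr
        exact ih (by omega)
      _ = ((∑ i ∈ s, x i) / #s) ^ (k + 1) := (pow_succ' _ _).symm

end LinearOrderedField

end Finset

theorem stmt_14_general (n m : ℕ) (hm : m ≤ n) (x : Fin n → ℝ)
    (hx0 : ∀ i, 0 ≤ x i) :
    (∑ J ∈ Finset.powersetCard m (Finset.univ : Finset (Fin n)), ∏ j ∈ J, x j) /
        (n.choose m : ℝ)
      ≤ ((∑ i, x i) / n) ^ m := by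
  simpa [esymm] using
    esymm_div_choose_le_pow (s := univ) (fun i _ => hx0 i) (hm.trans_eq (card_fin n).symm)

theorem stmt_14 (n m : ℕ) (hn : 0 < n) (hm : m ≤ n) (x : Fin n → ℝ)
    (hx0 : ∀ i, 0 ≤ x i) (hx1 : ∀ i, x i ≤ 1) :
    (∑ J ∈ Finset.powersetCard m (Finset.univ : Finset (Fin n)), ∏ j ∈ J, x j) /
        (n.choose m : ℝ)
      ≤ ((∑ i, x i) / n) ^ m :=
  stmt_14_general n m hm x hx0
end
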